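/- arXiv:2003.00314 — 5 statements merged into one kernel-verified Lean document; each statement's English description precedes it below -/
import Mathlib

section
/- Let p be an odd prime, d ≥ 2 an integer, ℓ = ord_p(d), and j ∈ {2,...,d-1}. Then j + ord_p(binomial(d,j)) ≥ 2 + ℓ. -/
theorem padicValNat_le_padicValNat_choose_add (p : ℕ) [Fact p.Prime] {n k : ℕ} (hk : 0 < k)
    (hkn : k ≤ n) : padicValNat p n ≤ padicValNat p (n.choose k) + padicValNat p k := by
  obtain ⟨m, rfl⟩ := Nat.exists_eq_add_one_of_ne_zero (n := n) (by omega)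
  obtain ⟨i, rfl⟩ := Nat.exists_eq_add_one_of_ne_zero (n := k) (by omega)
  have hchoose : m.choose i ≠ 0 := (Nat.choose_pos (by omega)).ne'
  have hval := congrArg (padicValNat p) (Nat.add_one_mul_choose_eq m i)
  rw [padicValNat.mul (by omega) hchoose,
    padicValNat.mul (Nat.choose_pos hkn).ne' (by omega)] at hval
  omega

theorem padicValNat_add_two_le {p n : ℕ} (hp : 3 ≤ p) (hn : 2 ≤ n) :
    padicValNat p n + 2 ≤ n := by
  set v := padicValNat p n
  rcases Nat.eq_zero_or_pos v with hv | hv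
  · omega
  calc v + 2 ≤ 1 + v * 2 := by omega
    _ ≤ (1 + 2) ^ v := one_add_le_pow_of_two_add_nonneg (by norm_num) v
    _ ≤ p ^ v := Nat.pow_le_pow_left hp v
    _ ≤ n := Nat.le_of_dvd (by omega) pow_padicValNat_dvd

theorem stmt_0_general (p : ℕ) (hp : p.Prime) (hodd : Odd p) (d : ℕ)
    (ℓ : ℕ) (hℓ : ℓ = padicValNat p d) (j : ℕ) (hj1 : 2 ≤ j) (hj2 : j ≤ d - 1) :
    2 + ℓ ≤ j + padicValNat p (d.choose j) := by
  have : Fact p.Prime := ⟨hp⟩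
  have hp3 : 3 ≤ p := by have := hp.two_le; have := Nat.odd_iff.mp hodd; omega
  have hdiv := padicValNat_le_padicValNat_choose_add p (n := d) (k := j) (by omega) (by omega)
  have hsmall := padicValNat_add_two_le hp3 hj1
  omega

theorem stmt_0 (p : ℕ) (hp : p.Prime) (hodd : Odd p) (d : ℕ) (hd : 2 ≤ d)
    (ℓ : ℕ) (hℓ : ℓ = padicValNat p d) (j : ℕ) (hj1 : 2 ≤ j) (hj2 : j ≤ d - 1) :
    2 + ℓ ≤ j + padicValNat p (d.choose j) :=
  stmt_0_general p hp hodd d ℓ hℓ j hj1 hj2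
end

section
/- Let p be a prime, h ≥ 3 and d ≥ 4 integers, and let g(x) = p^{2h}·(x + p^{h-1})^d - x². Define G(x) = g(p^{(h-1)d/2 + h}·x) / p^{(h-1)d + 2h} (assume d is even so the exponent (h-1)d/2 is an integer). Then G ∈ Z_p[x] and G(x) ≡ 1 - x² mod p^{d(h-1)/2 + 1}. -/
/-!
Write `m = (h - 1) d / 2`, so that `(h - 1) d = 2m`. Then `p^(2h) p^((h-1)d) = (p^(m+h))^2` and the
scalings cancel exactly:
`G = (1 + p^(m+1) x)^d - x^2`, a polynomial with coefficients in `ℤ_p`. Then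
`G - (1 - x^2) = (1 + p^(m+1) x)^d - 1` is divisible by `p^(m+1)` in `ℤ_p[x]`.
-/

open Polynomial

theorem Polynomial.C_dvd_one_add_C_mul_X_pow_sub_one {R : Type*} [CommRing R] (q : R) (d : ℕ) :
    C q ∣ (1 + C q * X) ^ d - 1 := by
  have h := sub_dvd_pow_sub_pow (1 + C q * X : R[X]) 1 d
  rw [add_sub_cancel_left, one_pow] at h
  exact (dvd_mul_right (C q) X).trans h

theorem Polynomial.C_mul_comp_C_mul_X_of_mul_pow_eq_sq {K : Type*} [Field K] (u v w c : K) (d : ℕ)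
    (hc : c ≠ 0) (hvw : c = v * w) (huv : u * v ^ d = c ^ 2) :
    C (c ^ 2)⁻¹ * (C u * (X + C v) ^ d - X ^ 2).comp (C c * X) = (1 + C w * X) ^ d - X ^ 2 := by
  have hlin : C c * X + C v = C v * (1 + C w * X) := by
    rw [hvw, C_mul]; ring
  have hscale : C (c ^ 2)⁻¹ * (C u * C v ^ d) = 1 := by
    rw [← C_pow, ← C_mul, ← C_mul, huv, inv_mul_cancel₀ (pow_ne_zero 2 hc), C_1]
  have hsq : C (c ^ 2)⁻¹ * (C c * X) ^ 2 = X ^ 2 := by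
    rw [mul_pow, ← C_pow, ← mul_assoc, ← C_mul, inv_mul_cancel₀ (pow_ne_zero 2 hc), C_1, one_mul]
  simp only [sub_comp, mul_comp, pow_comp, add_comp, X_comp, C_comp]
  rw [hlin, mul_pow]
  linear_combination (1 + C w * X) ^ d * hscale - hsq

namespace PadicInt

variable {p : ℕ} [Fact p.Prime]

theorem norm_coeff_map_le_one (P : ℤ_[p][X]) (n : ℕ) : ‖(P.map Coe.ringHom).coeff n‖ ≤ 1 := by
  rw [coeff_map]
  exact norm_le_one _

theorem norm_coeff_C_mul_map_le (q : ℚ_[p]) (P : ℤ_[p][X]) (n : ℕ) :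
    ‖(C q * P.map Coe.ringHom).coeff n‖ ≤ ‖q‖ := by
  rw [coeff_C_mul, norm_mul]
  exact mul_le_of_le_one_right (norm_nonneg q) (norm_coeff_map_le_one P n)

end PadicInt

theorem stmt_10_general (p : ℕ) [Fact p.Prime] (h d : ℕ) (hh : 3 ≤ h) (hde : Even d)
    (g G : Polynomial ℚ_[p])
    (hg : g = C ((p : ℚ_[p]) ^ (2 * h)) * (X + C ((p : ℚ_[p]) ^ (h - 1))) ^ d - X ^ 2)
    (hG : G = C (((p : ℚ_[p]) ^ ((h - 1) * d + 2 * h))⁻¹) *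
        g.comp (C ((p : ℚ_[p]) ^ ((h - 1) * d / 2 + h)) * X)) :
    (∀ n, ‖G.coeff n‖ ≤ 1) ∧
    (∀ n, ‖(G - (1 - X ^ 2)).coeff n‖ ≤ (p : ℝ) ^ (-((d * (h - 1) / 2 + 1 : ℕ) : ℤ))) := by
  set m := (h - 1) * d / 2
  have hm : (h - 1) * d = 2 * m := (Nat.mul_div_cancel' (hde.mul_left (h - 1)).two_dvd).symm
  have hp : (p : ℚ_[p]) ≠ 0 := Nat.cast_ne_zero.mpr (Fact.out : p.Prime).ne_zero
  obtain ⟨R, hR⟩ := C_dvd_one_add_C_mul_X_pow_sub_one ((p : ℤ_[p]) ^ (m + 1)) d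
  have hGint : G = ((1 + C ((p : ℤ_[p]) ^ (m + 1)) * X) ^ d - X ^ 2).map PadicInt.Coe.ringHom := by
    have hc : (p : ℚ_[p]) ^ ((h - 1) * d + 2 * h) = ((p : ℚ_[p]) ^ (m + h)) ^ 2 := by
      rw [← pow_mul, hm]; ring
    rw [hG, hg, hc, C_mul_comp_C_mul_X_of_mul_pow_eq_sq _ _ ((p : ℚ_[p]) ^ (m + 1)) _ _
      (pow_ne_zero _ hp) (by rw [← pow_add]; congr 1; omega)
      (by rw [← pow_mul, ← pow_add, ← pow_mul]; congr 1; linarith [mul_comm d (h - 1)])]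
    simp
  refine ⟨fun n => hGint ▸ PadicInt.norm_coeff_map_le_one _ n, fun n => ?_⟩
  have hdiff : G - (1 - X ^ 2) = C ((p : ℚ_[p]) ^ (m + 1)) * R.map PadicInt.Coe.ringHom := by
    have hsub : G - (1 - X ^ 2) = ((1 + C ((p : ℤ_[p]) ^ (m + 1)) * X) ^ d - 1).map
        PadicInt.Coe.ringHom := by
      rw [hGint]
      simp only [Polynomial.map_sub, Polynomial.map_one, Polynomial.map_pow, map_X]
      ring
    rw [hsub, hR, Polynomial.map_mul, map_C, map_pow, map_natCast]
  rw [hdiff, mul_comm d, ← Padic.norm_p_pow]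
  exact PadicInt.norm_coeff_C_mul_map_le _ R n

theorem stmt_10 (p : ℕ) [Fact p.Prime] (h d : ℕ) (hh : 3 ≤ h) (hd : 4 ≤ d) (hde : Even d)
    (g G : Polynomial ℚ_[p])
    (hg : g = C ((p : ℚ_[p]) ^ (2 * h)) * (X + C ((p : ℚ_[p]) ^ (h - 1))) ^ d - X ^ 2)
    (hG : G = C (((p : ℚ_[p]) ^ ((h - 1) * d + 2 * h))⁻¹) *
        g.comp (C ((p : ℚ_[p]) ^ ((h - 1) * d / 2 + h)) * X)) :
    (∀ n, ‖G.coeff n‖ ≤ 1) ∧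
    (∀ n, ‖(G - (1 - X ^ 2)).coeff n‖ ≤ (p : ℝ) ^ (-((d * (h - 1) / 2 + 1 : ℕ) : ℤ))) :=
  stmt_10_general p h d hh hde g G hg hG
end

section
/- Let p be an odd prime, h ≥ 3 an integer, and d ≥ 4 an even integer with d ≤ e^h. Then the tetranomial f(x) = x^d - p^{-2h}x² + 2p^{-(h+1)}x - p^{-2} has two distinct roots x₁, x₂ ∈ Q_p with |x₁ - x₂|_p ≤ p^{-((h-1)d/2 + h)}. -/
/-!
Writing `d = 2m`, the tetranomial is the difference of squares `(x^m)² - (x/p^h - 1/p)²`.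
Substituting `x = p^(h-1) z` turns the two factors into `p^K z^m = ±(z - 1)` with
`K = (h-1)m + 1`, and Hensel's lemma at `z = 1` solves each in `ℤ_p`. Subtracting the two
equations gives `z₁ - z₂ = p^K (z₁^m + z₂^m)`, so `|x₁ - x₂| ≤ p^{-(h-1)-K}`.
-/

open Polynomial

theorem PadicInt.exists_mul_pow_eq_sub_one {p : ℕ} [Fact p.Prime] {c : ℤ_[p]} (hc : ‖c‖ < 1)
    (m : ℕ) : ∃ z : ℤ_[p], c * z ^ m = z - 1 := by
  set F : ℤ_[p][X] := X - 1 - C c * X ^ m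
  have hF : ‖F.aeval (1 : ℤ_[p])‖ = ‖c‖ := by simp [F]
  have hF' : ‖F.derivative.aeval (1 : ℤ_[p])‖ = 1 := by
    have hcm : ‖c * m‖ < 1 :=
      (norm_mul_le_of_le le_rfl (PadicInt.norm_le_one _)).trans_lt (by simpa)
    have hunit := IsLocalRing.isUnit_one_sub_self_of_mem_nonunits _ (PadicInt.mem_nonunits.2 hcm)
    simpa [F, derivative_X_pow] using PadicInt.isUnit_iff.mp hunit
  obtain ⟨z, hz, -⟩ := hensels_lemma (F := F) (a := 1) (by rw [hF, hF', one_pow]; exact hc)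
  exact ⟨z, by simp [F] at hz; linear_combination -hz⟩

theorem PadicInt.exists_ne_mul_pow_eq_sub_one_and_one_sub {p : ℕ} [Fact p.Prime] {c : ℤ_[p]}
    (hc₀ : c ≠ 0) (hc : ‖c‖ < 1) (m : ℕ) :
    ∃ z₁ z₂ : ℤ_[p], z₁ ≠ z₂ ∧ c * z₁ ^ m = z₁ - 1 ∧ c * z₂ ^ m = 1 - z₂ ∧
      ‖z₁ - z₂‖ ≤ ‖c‖ := by
  obtain ⟨z₁, hz₁⟩ := exists_mul_pow_eq_sub_one hc m
  obtain ⟨z₂, hz₂⟩ := exists_mul_pow_eq_sub_one (c := -c) (by rwa [norm_neg]) m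
  replace hz₂ : c * z₂ ^ m = 1 - z₂ := by linear_combination -hz₂
  refine ⟨z₁, z₂, ?_, hz₁, hz₂, ?_⟩
  · rintro rfl
    have h1 : z₁ = 1 := by
      have : (2 : ℤ_[p]) * (z₁ - 1) = 0 := by linear_combination hz₂ - hz₁
      exact sub_eq_zero.mp ((mul_eq_zero.mp this).resolve_left two_ne_zero)
    simp [h1, hc₀] at hz₁
  · have hdiff : z₁ - z₂ = c * (z₁ ^ m + z₂ ^ m) := by linear_combination -hz₁ - hz₂
    rw [hdiff, norm_mul]
    exact mul_le_of_le_one_right (norm_nonneg c) (PadicInt.norm_le_one _)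

theorem tetranomial_eq_zero_of_sq_eq {K : Type*} [Field K] {P z : K} (hP : P ≠ 0) {h : ℕ}
    (hh : 1 ≤ h) (m : ℕ) (hz : (P ^ ((h - 1) * m + 1) * z ^ m) ^ 2 = (z - 1) ^ 2) :
    (P ^ (h - 1) * z) ^ (2 * m) - (P ^ (2 * h))⁻¹ * (P ^ (h - 1) * z) ^ 2 +
      2 * (P ^ (h + 1))⁻¹ * (P ^ (h - 1) * z) - (P ^ 2)⁻¹ = 0 := by
  obtain ⟨k, rfl⟩ := Nat.exists_eq_add_of_le' hh
  rw [Nat.add_sub_cancel] at hz ⊢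
  calc _ = ((P ^ (k * m + 1) * z ^ m) ^ 2 - (z - 1) ^ 2) / P ^ 2 := by
        field_simp
        ring
    _ = 0 := by rw [hz, sub_self, zero_div]

theorem stmt_11_general (p : ℕ) [Fact p.Prime] (h d : ℕ)
    (hh : 3 ≤ h) (hde : Even d) :
    ∃ x₁ x₂ : ℚ_[p], x₁ ≠ x₂ ∧
      (x₁ ^ d - ((p : ℚ_[p]) ^ (2 * h))⁻¹ * x₁ ^ 2 +
        2 * ((p : ℚ_[p]) ^ (h + 1))⁻¹ * x₁ - ((p : ℚ_[p]) ^ 2)⁻¹ = 0) ∧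
      (x₂ ^ d - ((p : ℚ_[p]) ^ (2 * h))⁻¹ * x₂ ^ 2 +
        2 * ((p : ℚ_[p]) ^ (h + 1))⁻¹ * x₂ - ((p : ℚ_[p]) ^ 2)⁻¹ = 0) ∧
      ‖x₁ - x₂‖ ≤ (p : ℝ) ^ (-(((h - 1) * d / 2 + h : ℕ) : ℤ)) := by
  obtain ⟨m, rfl⟩ := hde.two_dvd
  have hp : p.Prime := Fact.out
  have hp₀ : (p : ℚ_[p]) ≠ 0 := Nat.cast_ne_zero.2 hp.ne_zero
  set K := (h - 1) * m + 1
  have hc₀ : (p : ℤ_[p]) ^ K ≠ 0 := pow_ne_zero _ (Nat.cast_ne_zero.2 hp.ne_zero)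
  have hc : ‖(p : ℤ_[p]) ^ K‖ < 1 := by
    rw [norm_pow, PadicInt.norm_p]
    exact pow_lt_one₀ (by positivity) (inv_lt_one_of_one_lt₀ (by exact_mod_cast hp.one_lt))
      (by omega)
  obtain ⟨z₁, z₂, hne, hz₁, hz₂, hdist⟩ :=
    PadicInt.exists_ne_mul_pow_eq_sub_one_and_one_sub hc₀ hc m
  have hroot (z : ℤ_[p]) (hz : ((p : ℤ_[p]) ^ K * z ^ m) ^ 2 = (z - 1) ^ 2) :=
    tetranomial_eq_zero_of_sq_eq hp₀ (by omega : 1 ≤ h) m (z := (z : ℚ_[p]))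
      (by exact_mod_cast congrArg ((↑) : ℤ_[p] → ℚ_[p]) hz)
  refine ⟨_, _, ?_, hroot z₁ (by rw [hz₁]), hroot z₂ (by rw [hz₂]; ring), ?_⟩
  · exact fun heq ↦ hne (Subtype.coe_injective (mul_left_cancel₀ (pow_ne_zero _ hp₀) heq))
  · have hexp : (h - 1) * (2 * m) / 2 + h = (h - 1) + K := by
      rw [mul_left_comm, Nat.mul_div_cancel_left _ two_pos]; omega
    rw [← mul_sub, norm_mul, ← PadicInt.coe_sub, PadicInt.padic_norm_e_of_padicInt, hexp,
      Nat.cast_add, neg_add, zpow_add₀ (by exact_mod_cast hp.ne_zero), Padic.norm_p_pow]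
    gcongr
    exact hdist.trans_eq (PadicInt.norm_p_pow K)

theorem stmt_11 (p : ℕ) [Fact p.Prime] (hodd : Odd p) (h d : ℕ)
    (hh : 3 ≤ h) (hd : 4 ≤ d) (hde : Even d) (hdh : (d : ℝ) ≤ Real.exp h) :
    ∃ x₁ x₂ : ℚ_[p], x₁ ≠ x₂ ∧
      (x₁ ^ d - ((p : ℚ_[p]) ^ (2 * h))⁻¹ * x₁ ^ 2 +
        2 * ((p : ℚ_[p]) ^ (h + 1))⁻¹ * x₁ - ((p : ℚ_[p]) ^ 2)⁻¹ = 0) ∧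
      (x₂ ^ d - ((p : ℚ_[p]) ^ (2 * h))⁻¹ * x₂ ^ 2 +
        2 * ((p : ℚ_[p]) ^ (h + 1))⁻¹ * x₂ - ((p : ℚ_[p]) ^ 2)⁻¹ = 0) ∧
      ‖x₁ - x₂‖ ≤ (p : ℝ) ^ (-(((h - 1) * d / 2 + h : ℕ) : ℤ)) :=
  stmt_11_general p h d hh hde
end

section
/- Let p be a prime and f ∈ Z[x] with f(0) ≠ 0. Suppose ζ ∈ Z_p is a degenerate root of f, i.e., f(ζ) = f'(ζ) = 0. Write f(x) = c₁ + c₂x^{a₂} + c₃x^{a₃} with c₁, c₂, c₃ nonzero integers and a₃ > a₂ ≥ 1. Then ζ ≠ 0, and ζ satisfies the two binomial equations (a₃ - a₂)·c₂·ζ^{a₂} = -c₁·a₃ and -a₃·c₃·ζ^{a₃ - a₂} = c₂·a₂. -/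
section Trinomial

variable {R : Type*}

theorem ne_zero_of_trinomial_root [Semiring R] {c₁ c₂ c₃ ζ : R} {a₂ a₃ : ℕ}
    (hc₁ : c₁ ≠ 0) (ha₂ : a₂ ≠ 0) (ha₃ : a₃ ≠ 0) (hroot : c₁ + c₂ * ζ ^ a₂ + c₃ * ζ ^ a₃ = 0) :
    ζ ≠ 0 := by
  rintro rfl
  simp only [zero_pow ha₂, zero_pow ha₃, mul_zero, add_zero] at hroot
  exact hc₁ hroot

theorem mul_trinomial_deriv [CommSemiring R] (c₂ c₃ ζ : R) {a₂ a₃ : ℕ}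
    (ha₂ : a₂ ≠ 0) (ha₃ : a₃ ≠ 0) :
    ζ * ((a₂ : R) * c₂ * ζ ^ (a₂ - 1) + (a₃ : R) * c₃ * ζ ^ (a₃ - 1)) =
      (a₂ : R) * c₂ * ζ ^ a₂ + (a₃ : R) * c₃ * ζ ^ a₃ := by
  rw [← pow_sub_one_mul ha₂ ζ, ← pow_sub_one_mul ha₃ ζ]
  ring

theorem neg_mul_pow_sub_eq_of_add_eq_zero [CommRing R] [IsDomain R] {x y ζ : R} {m n : ℕ}
    (hmn : m ≤ n) (hζ : ζ ≠ 0) (h : x * ζ ^ m + y * ζ ^ n = 0) :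
    -y * ζ ^ (n - m) = x := by
  refine mul_right_cancel₀ (pow_ne_zero m hζ) ?_
  rw [mul_assoc, ← pow_add, Nat.sub_add_cancel hmn]
  linear_combination -h

end Trinomial

theorem stmt_14_general (p : ℕ) [Fact p.Prime]
    (c₁ c₂ c₃ : ℤ) (hc₁ : c₁ ≠ 0)
    (a₂ a₃ : ℕ) (ha₂ : 1 ≤ a₂) (ha : a₂ < a₃)
    (ζ : ℤ_[p])
    (hroot : (c₁ : ℤ_[p]) + (c₂ : ℤ_[p]) * ζ ^ a₂ + (c₃ : ℤ_[p]) * ζ ^ a₃ = 0)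
    (hderiv : (a₂ : ℤ_[p]) * (c₂ : ℤ_[p]) * ζ ^ (a₂ - 1) +
      (a₃ : ℤ_[p]) * (c₃ : ℤ_[p]) * ζ ^ (a₃ - 1) = 0) :
    ζ ≠ 0 ∧
    ((a₃ : ℤ_[p]) - (a₂ : ℤ_[p])) * (c₂ : ℤ_[p]) * ζ ^ a₂ = -(c₁ : ℤ_[p]) * (a₃ : ℤ_[p]) ∧
    -(a₃ : ℤ_[p]) * (c₃ : ℤ_[p]) * ζ ^ (a₃ - a₂) = (c₂ : ℤ_[p]) * (a₂ : ℤ_[p]) := by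
  have ha₂ : a₂ ≠ 0 := by omega
  have ha₃ : a₃ ≠ 0 := by omega
  have hζ : ζ ≠ 0 :=
    ne_zero_of_trinomial_root (Int.cast_ne_zero.mpr hc₁) ha₂ ha₃ hroot
  have heuler : (a₂ : ℤ_[p]) * c₂ * ζ ^ a₂ + (a₃ : ℤ_[p]) * c₃ * ζ ^ a₃ = 0 := by
    rw [← mul_trinomial_deriv _ _ ζ ha₂ ha₃, hderiv, mul_zero]
  refine ⟨hζ, by linear_combination (a₃ : ℤ_[p]) * hroot - heuler, ?_⟩
  linear_combination neg_mul_pow_sub_eq_of_add_eq_zero ha.le hζ heuler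

theorem stmt_14 (p : ℕ) [Fact p.Prime]
    (c₁ c₂ c₃ : ℤ) (hc₁ : c₁ ≠ 0) (hc₂ : c₂ ≠ 0) (hc₃ : c₃ ≠ 0)
    (a₂ a₃ : ℕ) (ha₂ : 1 ≤ a₂) (ha : a₂ < a₃)
    (ζ : ℤ_[p])
    (hroot : (c₁ : ℤ_[p]) + (c₂ : ℤ_[p]) * ζ ^ a₂ + (c₃ : ℤ_[p]) * ζ ^ a₃ = 0)
    (hderiv : (a₂ : ℤ_[p]) * (c₂ : ℤ_[p]) * ζ ^ (a₂ - 1) +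
      (a₃ : ℤ_[p]) * (c₃ : ℤ_[p]) * ζ ^ (a₃ - 1) = 0) :
    ζ ≠ 0 ∧
    ((a₃ : ℤ_[p]) - (a₂ : ℤ_[p])) * (c₂ : ℤ_[p]) * ζ ^ a₂ = -(c₁ : ℤ_[p]) * (a₃ : ℤ_[p]) ∧
    -(a₃ : ℤ_[p]) * (c₃ : ℤ_[p]) * ζ ^ (a₃ - a₂) = (c₂ : ℤ_[p]) * (a₂ : ℤ_[p]) :=
  stmt_14_general p c₁ c₂ c₃ hc₁ a₂ a₃ ha₂ ha ζ hroot hderiv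
end

section
/- Let p be an odd prime and f(x) = c₁ + c₂x^d ∈ Z[x] with p ∤ c₁c₂, and let ℓ = ord_p(d). Suppose ζ₀ ∈ {1,...,p-1} is a root of f modulo p. Then for every j ∈ {2,...,d-1}, ord_p(f^{(j)}(ζ₀)/j!) = ord_p(binomial(d,j)), and consequently min over j ≥ 2 of (j + ord_p(f^{(j)}(ζ₀)/j!)) ≥ 2 + ℓ, while 1 + ord_p(f'(ζ₀)) = 1 + ℓ; hence s(f,ζ₀) := min_{i ≥ 0} (i + ord_p(f^{(i)}(ζ₀)/i!)) = min(ord_p(f(ζ₀)), 1 + ℓ). -/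
/-!
The Taylor coefficients of `c₁ + c₂ X ^ d` at `ζ₀` are `c₂ ζ₀ ^ (d - j) * (d choose j)` for `j ≥ 1`,
so when `p ∤ c₂ ζ₀` their `p`-adic valuations are those of the binomial coefficients. The identity
`d * (d - 1 choose j - 1) = (d choose j) * j` gives `ord_p d ≤ ord_p (d choose j) + ord_p j`, and for
odd `p` and `j ≥ 2` one has `ord_p j + 2 ≤ j` (as `j ≥ p ^ ord_p j ≥ 3 ^ ord_p j`). Hence every term
with `j ≥ 2` in the minimum defining `s(f, ζ₀)` is at least `2 + ord_p d`, one more than the term `j = 1`.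
-/

open Polynomial

lemma taylor_C_add_C_mul_X_pow_coeff {R : Type*} [CommSemiring R] (a b r : R) (d : ℕ) {j : ℕ}
    (hj : j ≠ 0) : (taylor r (C a + C b * X ^ d)).coeff j = b * (r ^ (d - j) * d.choose j) := by
  rw [taylor_apply, add_comp, C_comp, mul_comp, C_comp, pow_comp, X_comp, coeff_add, coeff_C,
    if_neg hj, zero_add, coeff_C_mul, coeff_X_add_C_pow]

lemma emultiplicity_mul_pow_mul_natCast {p : ℕ} (hp : p.Prime) {b r : ℤ} (hb : ¬ (p : ℤ) ∣ b)
    (hr : ¬ (p : ℤ) ∣ r) (k : ℕ) {n : ℕ} (hn : n ≠ 0) :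
    emultiplicity (p : ℤ) (b * (r ^ k * n)) = padicValNat p n := by
  have : Fact p.Prime := ⟨hp⟩
  have hpZ : Prime (p : ℤ) := Nat.prime_iff_prime_int.mp hp
  rw [emultiplicity_mul hpZ, emultiplicity_mul hpZ, emultiplicity_eq_zero.2 hb,
    emultiplicity_eq_zero.2 (fun h => hr (hpZ.dvd_of_dvd_pow h)), Int.natCast_emultiplicity,
    ← padicValNat_eq_emultiplicity hn, zero_add, zero_add]

lemma padicValNat_add_two_le_s18 {p j : ℕ} (hp : p.Prime) (hodd : Odd p) (hj : 2 ≤ j) :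
    padicValNat p j + 2 ≤ j := by
  set v := padicValNat p j
  rcases Nat.eq_zero_or_pos v with hv | hv
  · omega
  have hp3 : 3 ≤ p := by have := hp.two_le; rcases hodd with ⟨k, rfl⟩; omega
  have hbernoulli : 1 + v * 2 ≤ 3 ^ v := one_add_le_pow_of_two_add_nonneg (by norm_num) v
  calc v + 2 ≤ 3 ^ v := by omega
    _ ≤ p ^ v := Nat.pow_le_pow_left hp3 v
    _ ≤ j := Nat.le_of_dvd (by omega) pow_padicValNat_dvd

lemma padicValNat_le_padicValNat_choose_add_s18 {p d j : ℕ} [Fact p.Prime] (hj : 1 ≤ j)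
    (hjd : j ≤ d) : padicValNat p d ≤ padicValNat p (d.choose j) + padicValNat p j := by
  obtain ⟨n, rfl⟩ : ∃ n, d = n + 1 := ⟨d - 1, by omega⟩
  obtain ⟨k, rfl⟩ : ∃ k, j = k + 1 := ⟨j - 1, by omega⟩
  have hchoose := congrArg (padicValNat p) (Nat.add_one_mul_choose_eq n k)
  rw [padicValNat.mul (by omega) (Nat.choose_pos (by omega)).ne',
    padicValNat.mul (Nat.choose_pos hjd).ne' (by omega)] at hchoose
  omega

lemma padicValNat_add_two_le_add_padicValNat_choose {p d j : ℕ} (hp : p.Prime) (hodd : Odd p)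
    (hj : 2 ≤ j) (hjd : j ≤ d) : padicValNat p d + 2 ≤ j + padicValNat p (d.choose j) := by
  have : Fact p.Prime := ⟨hp⟩
  have := padicValNat_le_padicValNat_choose_add_s18 (p := p) (by omega : 1 ≤ j) hjd
  have := padicValNat_add_two_le_s18 hp hodd hj
  omega

section Binomial

variable {p : ℕ} (hp : p.Prime) {a b r : ℤ} (hb : ¬ (p : ℤ) ∣ b) (hr : ¬ (p : ℤ) ∣ r)
include hp hb hr

lemma emultiplicity_taylor_C_add_C_mul_X_pow_coeff {d j : ℕ} (hj : j ≠ 0) (hjd : j ≤ d) :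
    emultiplicity (p : ℤ) ((taylor r (C a + C b * X ^ d)).coeff j) = padicValNat p (d.choose j) := by
  rw [taylor_C_add_C_mul_X_pow_coeff a b r d hj]
  exact emultiplicity_mul_pow_mul_natCast hp hb hr _ (Nat.choose_pos hjd).ne'

lemma padicValNat_add_two_le_add_emultiplicity_taylor_C_add_C_mul_X_pow_coeff (hodd : Odd p)
    {d j : ℕ} (hj : 2 ≤ j) :
    ((2 + padicValNat p d : ℕ) : ℕ∞) ≤
      j + emultiplicity (p : ℤ) ((taylor r (C a + C b * X ^ d)).coeff j) := by
  rcases le_or_gt j d with hjd | hdj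
  · rw [emultiplicity_taylor_C_add_C_mul_X_pow_coeff hp hb hr (by omega) hjd, ← Nat.cast_add]
    exact_mod_cast (add_comm 2 _).trans_le
      (padicValNat_add_two_le_add_padicValNat_choose hp hodd hj hjd)
  · rw [taylor_C_add_C_mul_X_pow_coeff a b r d (by omega), Nat.choose_eq_zero_of_lt hdj]
    simp

end Binomial

lemma iInf_nat_eq_min_of_forall_le {α : Type*} [CompleteLinearOrder α] (g : ℕ → α)
    (h : ∀ i, 2 ≤ i → g 1 ≤ g i) : ⨅ i, g i = min (g 0) (g 1) := by
  refine le_antisymm (le_min (iInf_le g 0) (iInf_le g 1)) (le_iInf fun i => ?_)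
  match i with
  | 0 => exact min_le_left _ _
  | 1 => exact min_le_right _ _
  | n + 2 => exact (min_le_right _ _).trans (h _ (by omega))

theorem stmt_18_general (p : ℕ) (hp : p.Prime) (hodd : Odd p)
    (c₁ c₂ : ℤ) (d : ℕ) (hd : 2 ≤ d) (hpc : ¬ (p : ℤ) ∣ c₁ * c₂)
    (ℓ : ℕ) (hℓ : ℓ = padicValNat p d)
    (ζ₀ : ℤ) (hζ₀ : 1 ≤ ζ₀ ∧ ζ₀ ≤ (p : ℤ) - 1)
    (f : Polynomial ℤ) (hf : f = C c₁ + C c₂ * X ^ d) :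
    (∀ j : ℕ, 2 ≤ j → j ≤ d - 1 →
      emultiplicity (p : ℤ) ((Polynomial.taylor ζ₀ f).coeff j) =
        (padicValNat p (d.choose j) : ℕ∞)) ∧
    (∀ j : ℕ, 2 ≤ j → j ≤ d →
      ((2 + ℓ : ℕ) : ℕ∞) ≤ (j : ℕ∞) + emultiplicity (p : ℤ) ((Polynomial.taylor ζ₀ f).coeff j)) ∧
    ((1 : ℕ∞) + emultiplicity (p : ℤ) ((Polynomial.taylor ζ₀ f).coeff 1) = ((1 + ℓ : ℕ) : ℕ∞)) ∧
    (⨅ i : ℕ, ((i : ℕ∞) + emultiplicity (p : ℤ) ((Polynomial.taylor ζ₀ f).coeff i)) =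
      min (emultiplicity (p : ℤ) (f.eval ζ₀)) ((1 + ℓ : ℕ) : ℕ∞)) := by
  subst hℓ hf
  have hc₂ : ¬ (p : ℤ) ∣ c₂ := fun h => hpc (h.mul_left _)
  have hζ : ¬ (p : ℤ) ∣ ζ₀ := fun h => by have := Int.le_of_dvd (by omega) h; omega
  have hhigher := fun j (hj : 2 ≤ j) =>
    padicValNat_add_two_le_add_emultiplicity_taylor_C_add_C_mul_X_pow_coeff hp hc₂ hζ
      (a := c₁) (d := d) hodd hj
  have hlinear : (1 : ℕ∞) + emultiplicity (p : ℤ) ((taylor ζ₀ (C c₁ + C c₂ * X ^ d)).coeff 1) =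
      ((1 + padicValNat p d : ℕ) : ℕ∞) := by
    rw [emultiplicity_taylor_C_add_C_mul_X_pow_coeff hp hc₂ hζ one_ne_zero (by omega),
      Nat.choose_one_right, Nat.cast_add, Nat.cast_one]
  refine ⟨fun j hj hjd => emultiplicity_taylor_C_add_C_mul_X_pow_coeff hp hc₂ hζ (by omega)
    (by omega), fun j hj _ => hhigher j hj, hlinear, ?_⟩
  rw [iInf_nat_eq_min_of_forall_le, Nat.cast_zero, zero_add, taylor_coeff_zero, Nat.cast_one,
    hlinear]
  intro i hi
  rw [Nat.cast_one, hlinear]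
  exact le_trans (by exact_mod_cast (by omega : 1 + padicValNat p d ≤ 2 + padicValNat p d))
    (hhigher i hi)

theorem stmt_18 (p : ℕ) (hp : p.Prime) (hodd : Odd p)
    (c₁ c₂ : ℤ) (d : ℕ) (hd : 2 ≤ d) (hpc : ¬ (p : ℤ) ∣ c₁ * c₂)
    (ℓ : ℕ) (hℓ : ℓ = padicValNat p d)
    (ζ₀ : ℤ) (hζ₀ : 1 ≤ ζ₀ ∧ ζ₀ ≤ (p : ℤ) - 1)
    (f : Polynomial ℤ) (hf : f = C c₁ + C c₂ * X ^ d)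
    (hroot : (p : ℤ) ∣ f.eval ζ₀) :
    (∀ j : ℕ, 2 ≤ j → j ≤ d - 1 →
      emultiplicity (p : ℤ) ((Polynomial.taylor ζ₀ f).coeff j) =
        (padicValNat p (d.choose j) : ℕ∞)) ∧
    (∀ j : ℕ, 2 ≤ j → j ≤ d →
      ((2 + ℓ : ℕ) : ℕ∞) ≤ (j : ℕ∞) + emultiplicity (p : ℤ) ((Polynomial.taylor ζ₀ f).coeff j)) ∧
    ((1 : ℕ∞) + emultiplicity (p : ℤ) ((Polynomial.taylor ζ₀ f).coeff 1) = ((1 + ℓ : ℕ) : ℕ∞)) ∧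
    (⨅ i : ℕ, ((i : ℕ∞) + emultiplicity (p : ℤ) ((Polynomial.taylor ζ₀ f).coeff i)) =
      min (emultiplicity (p : ℤ) (f.eval ζ₀)) ((1 + ℓ : ℕ) : ℕ∞)) :=
  stmt_18_general p hp hodd c₁ c₂ d hd hpc ℓ hℓ ζ₀ hζ₀ f hf
end
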